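/- arXiv:2005.01405 — 3 statements merged into one kernel-verified Lean document; each statement's English description precedes it below -/
import Mathlib

section
/- Let β > 0 and α in the open unit simplex, and let ν be a global minimizer of f_{β,α}(ν) = -(β/2)Σᵢνᵢ² + Σᵢ νᵢ log(νᵢ/αᵢ) over the unit simplex. If αᵢ > αⱼ then νᵢ > νⱼ. -/
/-!
Only the linear part `-∑ₖ νₖ log αₖ` of the free energy distinguishes the coordinates, so swapping
`νᵢ` and `νⱼ` changes it by `(νᵢ - νⱼ)(log αᵢ - log αⱼ)` and a minimizer has `νⱼ ≤ νᵢ`. Moving a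
small mass `s` into an empty coordinate changes the energy by `s log s + O(s) < 0`, so minimizers
lie in the open simplex. There every transfer of mass between two coordinates is stationary, which
is the mean-field equation `-βνᵢ + log νᵢ - log αᵢ = -βνⱼ + log νⱼ - log αⱼ`; with `νᵢ = νⱼ`
it would force `αᵢ = αⱼ`.
-/

open Finset Filter Topology Real

noncomputable def pottsFreeEnergy {ι : Type*} [Fintype ι] (β : ℝ) (α ν : ι → ℝ) : ℝ :=
  -(β / 2) * ∑ k, ν k ^ 2 + ∑ k, ν k * log (ν k / α k)

noncomputable def siteEnergy (β a x : ℝ) : ℝ := -(β / 2) * x ^ 2 + x * log x - x * log a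

/-- Moves mass `s` from coordinate `k` to coordinate `i`. -/
def transferMass {ι : Type*} [DecidableEq ι] (ν : ι → ℝ) (i k : ι) (s : ℝ) : ι → ℝ :=
  ν + Pi.single i s - Pi.single k s

lemma mul_log_div_eq (x : ℝ) {a : ℝ} (ha : a ≠ 0) : x * log (x / a) = x * log x - x * log a := by
  rcases eq_or_ne x 0 with rfl | hx
  · simp
  · rw [log_div hx ha]; ring

lemma hasDerivAt_siteEnergy (β a : ℝ) {x : ℝ} (hx : x ≠ 0) :
    HasDerivAt (siteEnergy β a) (-β * x + log x + 1 - log a) x := by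
  show HasDerivAt (fun y => -(β / 2) * y ^ 2 + y * log y - y * log a) _ x
  exact ((((hasDerivAt_id' x).fun_pow 2).const_mul (-(β / 2))).fun_add
    (hasDerivAt_mul_log hx)).fun_sub ((hasDerivAt_id' x).mul_const (log a)) |>.congr_deriv
    (by push_cast; ring)

lemma siteEnergy_zero (β a : ℝ) : siteEnergy β a 0 = 0 := by
  simp [siteEnergy]

lemma siteEnergy_div_self (β a : ℝ) {x : ℝ} (hx : x ≠ 0) :
    siteEnergy β a x / x = log x + (-(β / 2) * x - log a) := by
  rw [siteEnergy]; field_simp; ring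

lemma IsMinOn.not_tendsto_slope_atBot {g : ℝ → ℝ} {c : ℝ} (hg : IsMinOn g (Set.Icc 0 c) 0)
    (hc : 0 < c) : ¬ Tendsto (slope g 0) (𝓝[>] 0) atBot := by
  intro h
  obtain ⟨s, hneg, hs⟩ := ((h.eventually_lt_atBot 0).and (Ioo_mem_nhdsGT hc)).exists
  have hle := isMinOn_iff.1 hg s (Set.Ioo_subset_Icc_self hs)
  rw [slope_def_field, sub_zero] at hneg
  exact (div_neg_iff.1 hneg).elim (fun h => by linarith [h.2, hs.1]) fun h => by linarith [h.1]

section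

variable {ι : Type*} [DecidableEq ι] {ν : ι → ℝ} {i k : ι}

lemma transferMass_apply_left (hik : i ≠ k) (s : ℝ) : transferMass ν i k s i = ν i + s := by
  simp [transferMass, hik]

lemma transferMass_apply_right (hik : i ≠ k) (s : ℝ) : transferMass ν i k s k = ν k - s := by
  simp [transferMass, hik.symm]

lemma transferMass_apply_of_ne {m : ι} (hi : m ≠ i) (hk : m ≠ k) (s : ℝ) :
    transferMass ν i k s m = ν m := by
  simp [transferMass, hi, hk]

variable [Fintype ι]

lemma transferMass_mem_stdSimplex (hν : ν ∈ stdSimplex ℝ ι) (hik : i ≠ k) {s : ℝ}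
    (hs : s ∈ Set.Icc (-ν i) (ν k)) : transferMass ν i k s ∈ stdSimplex ℝ ι := by
  refine ⟨fun m => ?_, ?_⟩
  · by_cases hi : m = i
    · subst hi; rw [transferMass_apply_left hik]; linarith [hs.1]
    by_cases hk : m = k
    · subst hk; rw [transferMass_apply_right hik]; linarith [hs.2]
    rw [transferMass_apply_of_ne hi hk]; exact hν.1 m
  · simp [transferMass, sum_add_distrib, sum_sub_distrib, hν.2]

end

section

variable {ι : Type*} [Fintype ι] {β : ℝ} {α ν μ : ι → ℝ} {i k : ι}

lemma Equiv.comp_mem_stdSimplex (σ : ι ≃ ι) (hν : ν ∈ stdSimplex ℝ ι) :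
    ν ∘ σ ∈ stdSimplex ℝ ι :=
  ⟨fun k => hν.1 (σ k), by rw [← hν.2]; exact σ.sum_comp ν⟩

lemma pottsFreeEnergy_eq_sum_siteEnergy (hα : ∀ k, α k ≠ 0) (ν : ι → ℝ) :
    pottsFreeEnergy β α ν = ∑ k, siteEnergy β (α k) (ν k) := by
  rw [pottsFreeEnergy, mul_sum, ← sum_add_distrib]
  refine sum_congr rfl fun k _ => ?_
  rw [mul_log_div_eq _ (hα k), siteEnergy]; ring

lemma pottsFreeEnergy_sub_of_eq_off_pair (hα : ∀ k, α k ≠ 0) (hik : i ≠ k)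
    (h : ∀ m, m ≠ i → m ≠ k → μ m = ν m) :
    pottsFreeEnergy β α μ - pottsFreeEnergy β α ν =
      (siteEnergy β (α i) (μ i) - siteEnergy β (α i) (ν i)) +
        (siteEnergy β (α k) (μ k) - siteEnergy β (α k) (ν k)) := by
  rw [pottsFreeEnergy_eq_sum_siteEnergy hα, pottsFreeEnergy_eq_sum_siteEnergy hα,
    ← sum_sub_distrib]
  exact Fintype.sum_eq_add i k hik fun m hm => by rw [h m hm.1 hm.2, sub_self]

variable [DecidableEq ι]

lemma pottsFreeEnergy_comp_swap_sub (hα : ∀ k, α k ≠ 0) (hik : i ≠ k) :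
    pottsFreeEnergy β α (ν ∘ Equiv.swap i k) - pottsFreeEnergy β α ν =
      (ν i - ν k) * (log (α i) - log (α k)) := by
  rw [pottsFreeEnergy_sub_of_eq_off_pair hα hik fun m hi hk => by
    simp [Equiv.swap_apply_of_ne_of_ne hi hk]]
  simp only [Function.comp_apply, Equiv.swap_apply_left, Equiv.swap_apply_right, siteEnergy]
  ring

variable (hα : ∀ k, α k ≠ 0) (hν : ν ∈ stdSimplex ℝ ι)
  (hmin : IsMinOn (pottsFreeEnergy β α) (stdSimplex ℝ ι) ν)
include hα hν hmin

lemma le_of_isMinOn_pottsFreeEnergy (hlog : log (α k) < log (α i)) : ν k ≤ ν i := by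
  have hik : i ≠ k := by rintro rfl; exact lt_irrefl _ hlog
  have h := sub_nonneg.2 <| isMinOn_iff.1 hmin _ ((Equiv.swap i k).comp_mem_stdSimplex hν)
  rw [pottsFreeEnergy_comp_swap_sub hα hik] at h
  by_contra! hlt
  nlinarith

lemma isMinOn_siteEnergy_transferMass (hik : i ≠ k) :
    IsMinOn (fun s => siteEnergy β (α i) (ν i + s) + siteEnergy β (α k) (ν k - s))
      (Set.Icc (-ν i) (ν k)) 0 := by
  refine isMinOn_iff.2 fun s hs => ?_
  have h := sub_nonneg.2 <| isMinOn_iff.1 hmin _ (transferMass_mem_stdSimplex hν hik hs)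
  rw [pottsFreeEnergy_sub_of_eq_off_pair hα hik fun m hi hk => transferMass_apply_of_ne hi hk s,
    transferMass_apply_left hik, transferMass_apply_right hik] at h
  simp only [add_zero, sub_zero]
  linarith

lemma pos_of_isMinOn_pottsFreeEnergy (i : ι) : 0 < ν i := by
  obtain ⟨k, -, hk⟩ := exists_lt_of_sum_lt (s := univ) (f := fun _ => (0 : ℝ)) (g := ν)
    (by simp [hν.2])
  by_contra! hi
  have hi0 : ν i = 0 := le_antisymm hi (hν.1 i)
  have hik : i ≠ k := by rintro rfl; linarith
  have hg := isMinOn_siteEnergy_transferMass hα hν hmin hik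
  rw [hi0, neg_zero] at hg
  refine hg.not_tendsto_slope_atBot hk ?_
  -- the slope splits as `siteEnergy (α i) s / s = log s + O(1)` plus a convergent difference quotient
  have hlog : Tendsto (fun s => log s + (-(β / 2) * s - log (α i))) (𝓝[>] 0) atBot :=
    tendsto_log_nhdsGT_zero.atBot_add
      (tendsto_nhdsWithin_of_tendsto_nhds ((Continuous.tendsto (by fun_prop) 0)))
  have hslope := (HasDerivAt.comp_const_sub (ν k) 0 (by
    rw [sub_zero]; exact hasDerivAt_siteEnergy β (α k) hk.ne')).tendsto_slope_zero_right
  refine (hlog.atBot_add hslope).congr' ?_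
  filter_upwards [self_mem_nhdsWithin] with s (hs : 0 < s)
  rw [slope_def_field]
  simp only [zero_add, sub_zero, add_zero, smul_eq_mul, siteEnergy_zero]
  rw [← siteEnergy_div_self β (α i) hs.ne']
  field_simp
  ring

lemma mean_field_eq_of_isMinOn_pottsFreeEnergy (hik : i ≠ k) :
    -β * ν i + log (ν i) - log (α i) = -β * ν k + log (ν k) - log (α k) := by
  have hi := pos_of_isMinOn_pottsFreeEnergy hα hν hmin i
  have hk := pos_of_isMinOn_pottsFreeEnergy hα hν hmin k
  have hloc := (isMinOn_siteEnergy_transferMass hα hν hmin hik).isLocalMin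
    (Icc_mem_nhds (by linarith) hk)
  have hd := (HasDerivAt.comp_const_add (ν i) 0 (by
      rw [add_zero]; exact hasDerivAt_siteEnergy β (α i) hi.ne')).add
    (HasDerivAt.comp_const_sub (ν k) 0 (by
      rw [sub_zero]; exact hasDerivAt_siteEnergy β (α k) hk.ne'))
  linarith [hloc.hasDerivAt_eq_zero hd]

end

open Finset in
theorem tilting_lemma_general
    (β : ℝ) (α ν : Fin 3 → ℝ)
    (hα : ∀ k, 0 < α k)
    (hν : ∀ k, 0 ≤ ν k) (hνsum : ∑ k, ν k = 1)
    (hmin : ∀ μ : Fin 3 → ℝ, (∀ k, 0 ≤ μ k) → (∑ k, μ k = 1) →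
      -(β/2) * ∑ k, (ν k)^2 + ∑ k, ν k * Real.log (ν k / α k)
        ≤ -(β/2) * ∑ k, (μ k)^2 + ∑ k, μ k * Real.log (μ k / α k))
    (i j : Fin 3) (hij : α j < α i) :
    ν j < ν i := by
  have hα₀ : ∀ k, α k ≠ 0 := fun k => (hα k).ne'
  have hmem : ν ∈ stdSimplex ℝ (Fin 3) := ⟨hν, hνsum⟩
  have hmin' : IsMinOn (pottsFreeEnergy β α) (stdSimplex ℝ (Fin 3)) ν :=
    isMinOn_iff.2 fun μ hμ => hmin μ hμ.1 hμ.2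
  have hlog : log (α j) < log (α i) := log_lt_log (hα j) hij
  refine (le_of_isMinOn_pottsFreeEnergy hα₀ hmem hmin' hlog).lt_of_ne fun heq => ?_
  have hne : i ≠ j := by rintro rfl; exact lt_irrefl _ hij
  have hmf := mean_field_eq_of_isMinOn_pottsFreeEnergy hα₀ hmem hmin' hne
  rw [heq] at hmf
  linarith

open Finset in
/-- Tilting Lemma: if ν is a global minimizer of the three-state Curie–Weiss
Potts free energy over the unit simplex and αᵢ > αⱼ, then νᵢ > νⱼ. -/
theorem tilting_lemma
    (β : ℝ) (hβ : 0 < β) (α ν : Fin 3 → ℝ)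
    (hα : ∀ k, 0 < α k) (hαsum : ∑ k, α k = 1)
    (hν : ∀ k, 0 ≤ ν k) (hνsum : ∑ k, ν k = 1)
    (hmin : ∀ μ : Fin 3 → ℝ, (∀ k, 0 ≤ μ k) → (∑ k, μ k = 1) →
      -(β/2) * ∑ k, (ν k)^2 + ∑ k, ν k * Real.log (ν k / α k)
        ≤ -(β/2) * ∑ k, (μ k)^2 + ∑ k, μ k * Real.log (μ k / α k))
    (i j : Fin 3) (hij : α j < α i) :
    ν j < ν i :=
  tilting_lemma_general β α ν hα hν hνsum hmin i j hij
end

section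
/- The function g(x) = 3x/((1+2x)(1-x)) - log((1+2x)/(1-x)) on (0,1) satisfies: g'(x) vanishes in (0,1) exactly at x = 1/4, g is strictly decreasing on (0, 1/4) and strictly increasing on (1/4, 1), lim_{x→0⁺} g(x) = 0, and lim_{x→1⁻} g(x) = +∞. Consequently g has a unique root s in (0,1), and s ∈ (1/4, 1). -/
/-!
On `(0, 1)` the derivative of `g` is `3x(4x - 1) / ((1 + 2x)(1 - x))²`, so `g` falls from
`g 0 = 0` to a negative minimum at `1/4` and then increases. Near `1` we write
`g x = (1 - x)⁻¹ (3x/(1 + 2x) + (1 - x) log (1 - x)) - log (1 + 2x)`; since `u log u → 0`, the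
bracket tends to `1` and the pole wins, so `g → +∞`. Hence `g` has no root on `(0, 1/4]` and,
by the intermediate value theorem and strict monotonicity, exactly one on `(1/4, 1)`.
-/

open Real Set Filter Topology

section Valley

variable {f : ℝ → ℝ} {a b c : ℝ}

lemma StrictAntiOn.neg_of_mem_Ioc (hf : StrictAntiOn f (Icc a c)) (ha : f a = 0) {x : ℝ}
    (hx : x ∈ Ioc a c) : f x < 0 :=
  ha ▸ hf ⟨le_rfl, hx.1.le.trans hx.2⟩ ⟨hx.1.le, hx.2⟩ hx.1

lemma mem_Ioo_of_strictAntiOn_of_eq_zero (hf : StrictAntiOn f (Icc a c)) (ha : f a = 0)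
    {x : ℝ} (hx : x ∈ Ioo a b) (hfx : f x = 0) : x ∈ Ioo c b :=
  ⟨not_le.mp fun hxc ↦ (hf.neg_of_mem_Ioc ha ⟨hx.1, hxc⟩).ne hfx, hx.2⟩

lemma existsUnique_zero_of_strictAntiOn_of_strictMonoOn (hac : a < c) (hcb : c < b)
    (ha : f a = 0) (hanti : StrictAntiOn f (Icc a c)) (hmono : StrictMonoOn f (Ico c b))
    (hcont : ContinuousOn f (Ico c b))
    (htop : Tendsto f (𝓝[<] b) atTop) :
    ∃! x, x ∈ Ioo a b ∧ f x = 0 := by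
  obtain ⟨d, hfd, hd⟩ : ∃ d, 0 < f d ∧ d ∈ Ioo c b :=
    ((htop.eventually_gt_atTop 0).and (Ioo_mem_nhdsLT hcb)).exists
  have hfc : f c < 0 := hanti.neg_of_mem_Ioc ha ⟨hac, le_rfl⟩
  obtain ⟨x, hx, hfx⟩ := intermediate_value_Ioo hd.1.le
    (hcont.mono (Icc_subset_Ico_right hd.2)) ⟨hfc, hfd⟩
  have hxb : x ∈ Ioo c b := ⟨hx.1, hx.2.trans hd.2⟩
  refine ⟨x, ⟨⟨hac.trans hx.1, hxb.2⟩, hfx⟩, fun y ⟨hy, hfy⟩ ↦ ?_⟩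
  have hyb := mem_Ioo_of_strictAntiOn_of_eq_zero hanti ha hy hfy
  exact hmono.injOn (Ioo_subset_Ico_self hyb) (Ioo_subset_Ico_self hxb) (hfy.trans hfx.symm)

end Valley

noncomputable def crossingFunction : ℝ → ℝ := fun x ↦
  3*x/((1 + 2*x)*(1 - x)) - Real.log ((1 + 2*x)/(1 - x))

lemma hasDerivAt_crossingFunction {x : ℝ} (hx₀ : -(1/2) < x) (hx₁ : x < 1) :
    HasDerivAt crossingFunction (3*x*(4*x - 1)/((1 + 2*x)*(1 - x))^2) x := by
  have h₁ : 0 < 1 + 2*x := by linarith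
  have h₂ : 0 < 1 - x := by linarith
  have hnum : HasDerivAt (fun x : ℝ ↦ 1 + 2*x) 2 x := by
    simpa using ((hasDerivAt_id x).const_mul 2).const_add 1
  have hden : HasDerivAt (fun x : ℝ ↦ 1 - x) (-1) x := (hasDerivAt_id x).const_sub 1
  have hrat := ((hasDerivAt_id x).const_mul 3).div (hnum.mul hden) (by positivity :
    (1 + 2*x)*(1 - x) ≠ 0)
  have hlog := (hnum.div hden h₂.ne').log (by positivity : (1 + 2*x)/(1 - x) ≠ 0)
  refine (hrat.sub hlog).congr_deriv ?_
  simp only [Pi.mul_apply, Pi.div_apply, id]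
  field_simp
  ring

lemma continuousOn_crossingFunction : ContinuousOn crossingFunction (Ioo (-(1/2)) 1) :=
  fun _ hx ↦ (hasDerivAt_crossingFunction hx.1 hx.2).continuousAt.continuousWithinAt

lemma crossingFunction_zero : crossingFunction 0 = 0 := by simp [crossingFunction]

lemma deriv_crossingFunction_eq_zero_iff {x : ℝ} (hx : x ∈ Ioo 0 1) :
    deriv crossingFunction x = 0 ↔ x = 1/4 := by
  have h₁ : 0 < 1 + 2*x := by linarith [hx.1]
  have h₂ : 0 < 1 - x := by linarith [hx.2]
  rw [(hasDerivAt_crossingFunction (by linarith [hx.1]) hx.2).deriv, div_eq_zero_iff,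
    or_iff_left (by positivity), mul_eq_zero, or_iff_right (by linarith [hx.1])]
  constructor <;> intro h <;> linarith

lemma strictAntiOn_crossingFunction : StrictAntiOn crossingFunction (Icc 0 (1/4)) := by
  refine strictAntiOn_of_deriv_neg (convex_Icc _ _)
    (continuousOn_crossingFunction.mono fun x hx ↦ ⟨by linarith [hx.1], by linarith [hx.2]⟩)
    fun x hx ↦ ?_
  rw [interior_Icc] at hx
  have h₁ : 0 < 1 + 2*x := by linarith [hx.1]
  have h₂ : 0 < 1 - x := by linarith [hx.2]
  rw [(hasDerivAt_crossingFunction (by linarith [hx.1]) (by linarith [hx.2])).deriv]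
  exact div_neg_of_neg_of_pos (by nlinarith [hx.1, hx.2]) (by positivity)

lemma strictMonoOn_crossingFunction : StrictMonoOn crossingFunction (Ico (1/4) 1) := by
  refine strictMonoOn_of_deriv_pos (convex_Ico _ _)
    (continuousOn_crossingFunction.mono fun x hx ↦ ⟨by linarith [hx.1], hx.2⟩)
    fun x hx ↦ ?_
  rw [interior_Ico] at hx
  have h₁ : 0 < 1 + 2*x := by linarith [hx.1]
  have h₂ : 0 < 1 - x := by linarith [hx.2]
  rw [(hasDerivAt_crossingFunction (by linarith [hx.1]) hx.2).deriv]
  exact div_pos (by nlinarith [hx.1, hx.2]) (by positivity)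

lemma tendsto_crossingFunction_nhdsGT_zero :
    Tendsto crossingFunction (𝓝[>] 0) (𝓝 0) := by
  have h := ((hasDerivAt_crossingFunction (x := 0) (by norm_num) (by norm_num)).continuousAt)
  rw [ContinuousAt, crossingFunction_zero] at h
  exact h.mono_left nhdsWithin_le_nhds

lemma crossingFunction_eq_inv_mul_sub {x : ℝ} (hx₀ : -(1/2) < x) (hx₁ : x < 1) :
    crossingFunction x =
      (1 - x)⁻¹ * (3*x/(1 + 2*x) + (1 - x) * log (1 - x)) - log (1 + 2*x) := by
  have h₁ : 0 < 1 + 2*x := by linarith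
  have h₂ : 0 < 1 - x := by linarith
  rw [crossingFunction, log_div h₁.ne' h₂.ne', mul_add, inv_mul_cancel_left₀ h₂.ne']
  field_simp
  ring

lemma tendsto_crossingFunction_nhdsLT_one :
    Tendsto crossingFunction (𝓝[<] 1) atTop := by
  have hgap : Tendsto (fun x : ℝ ↦ 1 - x) (𝓝[<] 1) (𝓝[>] 0) := by
    refine tendsto_nhdsWithin_of_tendsto_nhds_of_eventually_within _ ?_ ?_
    · exact ((continuous_const.sub continuous_id).tendsto' 1 0 (sub_self 1)).mono_left
        nhdsWithin_le_nhds
    · filter_upwards [self_mem_nhdsWithin] with x hx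
      exact sub_pos.mpr (mem_Iio.mp hx)
  have hbracket :
      Tendsto (fun x : ℝ ↦ 3*x/(1 + 2*x) + (1 - x) * log (1 - x)) (𝓝[<] 1) (𝓝 1) := by
    have hcont : ContinuousAt (fun x : ℝ ↦ 3*x/(1 + 2*x) + (1 - x) * log (1 - x)) 1 := by
      refine ContinuousAt.add (by fun_prop (disch := norm_num)) ?_
      exact (continuous_mul_log.comp (continuous_const.sub continuous_id)).continuousAt
    convert hcont.tendsto.mono_left nhdsWithin_le_nhds using 2
    norm_num
  have hlog : Tendsto (fun x : ℝ ↦ -log (1 + 2*x)) (𝓝[<] 1) (𝓝 (-log 3)) := by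
    have : ContinuousAt (fun x : ℝ ↦ -log (1 + 2*x)) 1 := by fun_prop (disch := norm_num)
    simpa [show (1 : ℝ) + 2 = 3 by norm_num] using this.tendsto.mono_left nhdsWithin_le_nhds
  refine ((hgap.inv_tendsto_nhdsGT_zero.atTop_mul_pos one_pos hbracket).atTop_add hlog).congr' ?_
  filter_upwards [Ioo_mem_nhdsLT (show (-(1/2) : ℝ) < 1 by norm_num)] with x hx
  rw [crossingFunction_eq_inv_mul_sub hx.1 hx.2, sub_eq_add_neg]
  rfl

/-- The function `g(x) = 3x/((1+2x)(1-x)) - log((1+2x)/(1-x))` characterizing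
the crossing temperature: its derivative vanishes on (0,1) exactly at 1/4, it
is strictly decreasing on (0,1/4) and strictly increasing on (1/4,1), tends to
0 at 0⁺ and to +∞ at 1⁻, and has a unique root s ∈ (0,1), with s ∈ (1/4,1). -/
theorem crossing_function_properties :
    let g : ℝ → ℝ := fun x =>
      3*x/((1 + 2*x)*(1 - x)) - Real.log ((1 + 2*x)/(1 - x))
    (∀ x ∈ Set.Ioo (0:ℝ) 1, deriv g x = 0 ↔ x = 1/4) ∧
    StrictAntiOn g (Set.Ioo 0 (1/4)) ∧
    StrictMonoOn g (Set.Ioo (1/4) 1) ∧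
    Filter.Tendsto g (nhdsWithin 0 (Set.Ioi 0)) (nhds 0) ∧
    Filter.Tendsto g (nhdsWithin 1 (Set.Iio 1)) Filter.atTop ∧
    (∃! s : ℝ, s ∈ Set.Ioo (0:ℝ) 1 ∧ g s = 0) ∧
    ∀ s : ℝ, s ∈ Set.Ioo (0:ℝ) 1 → g s = 0 → s ∈ Set.Ioo (1/4:ℝ) 1 := by
  intro g
  have hcont : ContinuousOn crossingFunction (Ico (1/4) 1) :=
    continuousOn_crossingFunction.mono fun x hx ↦ ⟨by linarith [hx.1], hx.2⟩
  exact ⟨fun x hx ↦ deriv_crossingFunction_eq_zero_iff hx,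
    strictAntiOn_crossingFunction.mono Ioo_subset_Icc_self,
    strictMonoOn_crossingFunction.mono Ioo_subset_Ico_self,
    tendsto_crossingFunction_nhdsGT_zero, tendsto_crossingFunction_nhdsLT_one,
    existsUnique_zero_of_strictAntiOn_of_strictMonoOn (by norm_num) (by norm_num)
      crossingFunction_zero strictAntiOn_crossingFunction strictMonoOn_crossingFunction hcont
      tendsto_crossingFunction_nhdsLT_one,
    fun _ hs ↦ mem_Ioo_of_strictAntiOn_of_eq_zero strictAntiOn_crossingFunction
      crossingFunction_zero hs⟩
end

section
/- Let β > 0 and let ν be an interior point of the unit simplex. Then ν is a stationary point of f_{β,α} with α = χ_β(ν) := (νᵢ e^{-βνᵢ} / Σₖ νₖ e^{-βνₖ})_{i=1,2,3}; conversely, if ν is a stationary point of f_{β,α} for some α in the open simplex, then α = χ_β(ν). -/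
/-! Along `ν + t v` the derivative of `f_{β,α}` at `t = 0` is `∑ vₖ (log (wₖ / αₖ) + 1)` with
`wₖ = νₖ e^{-βνₖ}`. It vanishes for every tangent `v` iff `wₖ / αₖ` does not depend on `k`, i.e.
iff `α` is proportional to `w`, and `∑ αₖ = 1` fixes the factor to `1 / ∑ wₖ`. -/

open Finset

theorem hasDerivAt_mul_log_div {a c : ℝ} (ha : a ≠ 0) (hc : c ≠ 0) :
    HasDerivAt (fun x : ℝ => x * Real.log (x / c)) (Real.log (a / c) + 1) a := by
  have h := ((Real.hasDerivAt_mul_log (div_ne_zero ha hc)).comp a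
      ((hasDerivAt_id' a).div_const c)).const_mul c
  refine (h.congr_deriv (by field_simp)).congr_of_eventuallyEq (.of_forall fun x => ?_)
  simp only [Function.comp_apply]
  field_simp

theorem deriv_freeEnergy_along_line {ι : Type*} [Fintype ι] (β : ℝ) (ν α v : ι → ℝ)
    (hν : ∀ k, ν k ≠ 0) (hα : ∀ k, α k ≠ 0) :
    deriv (fun t : ℝ =>
        -(β/2) * ∑ k, (ν k + t * v k)^2
          + ∑ k, (ν k + t * v k) * Real.log ((ν k + t * v k) / α k)) 0
      = ∑ k, v k * (-β * ν k + Real.log (ν k / α k) + 1) := by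
  have hline : ∀ k, HasDerivAt (fun t : ℝ => ν k + t * v k) (v k) 0 := fun k => by
    simpa using ((hasDerivAt_id (0 : ℝ)).mul_const (v k)).const_add (ν k)
  have hquad : HasDerivAt (fun t : ℝ => ∑ k, (ν k + t * v k)^2) (∑ k, 2 * ν k * v k) 0 := by
    simpa using HasDerivAt.fun_sum fun k _ => (hline k).fun_pow 2
  have hent : HasDerivAt (fun t : ℝ => ∑ k, (ν k + t * v k) * Real.log ((ν k + t * v k) / α k))
      (∑ k, (Real.log (ν k / α k) + 1) * v k) 0 :=
    HasDerivAt.fun_sum fun k _ =>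
      (hasDerivAt_mul_log_div (hν k) (hα k)).comp_of_eq 0 (hline k) (by simp)
  rw [((hquad.const_mul (-(β/2))).fun_add hent).deriv, mul_sum, ← sum_add_distrib]
  exact sum_congr rfl fun k _ => by ring

theorem forall_sum_eq_zero_imp_sum_mul_eq_zero_iff {ι : Type*} [Fintype ι] (c : ι → ℝ) :
    (∀ v : ι → ℝ, ∑ k, v k = 0 → ∑ k, v k * c k = 0) ↔ ∀ i j, c i = c j := by
  classical
  constructor
  · intro h i j
    have := h (Pi.single i 1 - Pi.single j 1) (by simp)
    simpa [Pi.single_apply, sub_mul, sum_sub_distrib, sub_eq_zero] using this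
  · intro h v hv
    rcases isEmpty_or_nonempty ι with _ | ⟨⟨i⟩⟩
    · simp
    · rw [sum_congr rfl fun k _ => by rw [h k i], ← sum_mul, hv, zero_mul]

theorem forall_div_eq_iff_eq_div_sum {ι : Type*} [Fintype ι] {w α : ι → ℝ}
    (hw : ∀ k, w k ≠ 0) (hα : ∀ k, α k ≠ 0) (hαsum : ∑ k, α k = 1) :
    (∀ i j, w i / α i = w j / α j) ↔ ∀ i, α i = w i / ∑ k, w k := by
  constructor
  · intro h i
    have hsum : ∑ k, w k = w i / α i := by
      rw [← mul_one (w i / α i), ← hαsum, mul_sum]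
      exact sum_congr rfl fun k _ => by rw [h i k, div_mul_cancel₀ _ (hα k)]
    rw [hsum, div_div_cancel₀ (hw i)]
  · intro h i j
    rw [h i, h j, div_div_cancel₀ (hw i), div_div_cancel₀ (hw j)]

open Finset in
theorem stationary_iff_catastrophe_map_general
    (β : ℝ) (ν α : Fin 3 → ℝ)
    (hν : ∀ k, 0 < ν k)
    (hα : ∀ k, 0 < α k) (hαsum : ∑ k, α k = 1) :
    (∀ v : Fin 3 → ℝ, (∑ k, v k = 0) →
        deriv (fun t : ℝ =>
          -(β/2) * ∑ k, (ν k + t * v k)^2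
            + ∑ k, (ν k + t * v k) * Real.log ((ν k + t * v k) / α k)) 0 = 0)
      ↔ (∀ i, α i = ν i * Real.exp (-β * ν i)
            / ∑ k, ν k * Real.exp (-β * ν k)) := by
  set w : Fin 3 → ℝ := fun k => ν k * Real.exp (-β * ν k) with hw
  have hw_pos : ∀ k, 0 < w k := fun k => mul_pos (hν k) (Real.exp_pos _)
  have hgradient : ∀ k, -β * ν k + Real.log (ν k / α k) + 1 = Real.log (w k / α k) + 1 := by
    intro k
    rw [hw, mul_div_right_comm, Real.log_mul (div_pos (hν k) (hα k)).ne' (Real.exp_ne_zero _),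
      Real.log_exp]
    ring
  simp_rw [deriv_freeEnergy_along_line β ν α _ (fun k => (hν k).ne') (fun k => (hα k).ne'),
    hgradient, forall_sum_eq_zero_imp_sum_mul_eq_zero_iff, add_left_inj]
  rw [← forall_div_eq_iff_eq_div_sum (fun k => (hw_pos k).ne') (fun k => (hα k).ne') hαsum]
  exact forall₂_congr fun i j =>
    Real.log_injOn_pos.eq_iff (div_pos (hw_pos i) (hα i)) (div_pos (hw_pos j) (hα j))

open Finset in
/-- An interior point ν of the simplex is a stationary point of f_{β,α}
(derivative zero along every tangent direction) if and only if
α = χ_β(ν) = (νᵢ e^{-βνᵢ} / Σₖ νₖ e^{-βνₖ})ᵢ. -/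
theorem stationary_iff_catastrophe_map
    (β : ℝ) (hβ : 0 < β) (ν α : Fin 3 → ℝ)
    (hν : ∀ k, 0 < ν k) (hνsum : ∑ k, ν k = 1)
    (hα : ∀ k, 0 < α k) (hαsum : ∑ k, α k = 1) :
    (∀ v : Fin 3 → ℝ, (∑ k, v k = 0) →
        deriv (fun t : ℝ =>
          -(β/2) * ∑ k, (ν k + t * v k)^2
            + ∑ k, (ν k + t * v k) * Real.log ((ν k + t * v k) / α k)) 0 = 0)
      ↔ (∀ i, α i = ν i * Real.exp (-β * ν i)
            / ∑ k, ν k * Real.exp (-β * ν k)) :=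
  stationary_iff_catastrophe_map_general β ν α hν hα hαsum
end
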